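/- arXiv:quant-ph/0409118 — 3 statements merged into one kernel-verified Lean document; each statement's English description precedes it below -/
import Mathlib

section
/- Segal–Bargmann inversion on ℝ^d in dimension 1 for Schwartz functions: if f : ℝ → ℂ is a Schwartz function, t > 0, and F(z) = ∫_ℝ (2πt)^{-1/2} exp(-(z-x)²/(2t)) f(x) dx, then for every x ∈ ℝ, f(x) = ∫_ℝ F(x+iy) e^{-y²/(2t)} (2πt)^{-1/2} dy, with absolute convergence of the integral. -/
open MeasureTheory Real SchwartzMap

open Complex FourierTransform

/-- Segal–Bargmann inversion on `ℝ` for Schwartz functions: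
`f(x) = ∫ F(x+iy) e^{-y²/(2t)} (2πt)^{-1/2} dy`, with absolute convergence. -/
theorem segal_bargmann_inversion_dim_one
    (t : ℝ) (ht : 0 < t) (f : SchwartzMap ℝ ℂ)
    (F : ℂ → ℂ)
    (hF : ∀ z : ℂ,
      F z = ∫ x : ℝ,
        (((2 * π * t) ^ (-(1 : ℝ) / 2) : ℝ) : ℂ) *
          Complex.exp (-(z - (x : ℂ)) ^ 2 / (2 * t)) * f x) :
    ∀ x : ℝ,
      Integrable (fun y : ℝ =>
        F ((x : ℂ) + Complex.I * (y : ℂ)) *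
          (((Real.exp (-y ^ 2 / (2 * t)) * (2 * π * t) ^ (-(1 : ℝ) / 2)) : ℝ) : ℂ))
        volume ∧
      (f x : ℂ) = ∫ y : ℝ,
        F ((x : ℂ) + Complex.I * (y : ℂ)) *
          (((Real.exp (-y ^ 2 / (2 * t)) * (2 * π * t) ^ (-(1 : ℝ) / 2)) : ℝ) : ℂ) := by
  intro x
  have hπ : (0:ℝ) < π := Real.pi_pos
  have h2πt : (0:ℝ) < 2 * π * t := by positivity
  have ht' : (t:ℂ) ≠ 0 := Complex.ofReal_ne_zero.mpr ht.ne'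
  set c : ℝ := (2 * π * t) ^ (-(1 : ℝ) / 2) with hc_def
  have hc_pos : 0 < c := Real.rpow_pos_of_pos h2πt _
  have hc_sqrt : c * Real.sqrt (2 * π * t) = 1 := by
    rw [hc_def, Real.sqrt_eq_rpow, ← Real.rpow_add h2πt]
    norm_num
  -- Fourier transform of f
  set Ff : ℝ → ℂ := 𝓕 ⇑f with hFf_def
  have hFf_int : Integrable Ff := by
    have := (fourierTransformCLM ℂ f).integrable (μ := volume)
    rwa [fourierTransformCLM_apply] at this
  have hFf_cont : Continuous Ff := by
    have := (fourierTransformCLM ℂ f).continuous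
    rwa [fourierTransformCLM_apply] at this
  -- Fourier inversion for f
  have hinv : ∀ u : ℝ, (f u : ℂ)
      = ∫ ξ : ℝ, Complex.exp (((2 * π * (ξ * u) : ℝ) : ℂ) * Complex.I) * Ff ξ := by
    intro u
    have h1 : 𝓕⁻ (𝓕 ⇑f) u = f u :=
      congrFun (Continuous.fourierInv_fourier_eq f.continuous f.integrable hFf_int) u
    rw [← h1, Real.fourierInv_eq']
    simp [RCLike.inner_apply, smul_eq_mul, hFf_def]
    simp only [mul_comm (u:ℂ)]
  -- the two-variable kernel
  set P : ℝ × ℝ → ℂ := fun p =>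
    Ff p.1 * Complex.exp (((2 * π * (p.1 * x) : ℝ) : ℂ) * Complex.I) *
      ((Real.exp (-(t / 2) * (p.2 / t + 2 * π * p.1) ^ 2) : ℝ) : ℂ) with hP_def
  have ht2 : (0:ℝ) < t / 2 := by positivity
  have gauss_int : ∀ ξ : ℝ,
      Integrable (fun y : ℝ => Real.exp (-(t/2) * (y / t + 2 * π * ξ) ^ 2)) := by
    intro ξ
    have h1 : Integrable (fun u : ℝ => Real.exp (-(t/2) * u ^ 2)) :=
      integrable_exp_neg_mul_sq ht2
    have h2 : Integrable (fun u : ℝ => Real.exp (-(t/2) * (u + 2 * π * ξ) ^ 2)) := by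
      simpa using h1.comp_sub_right (-(2 * π * ξ))
    simpa using h2.comp_div ht.ne'
  have gauss_val : ∀ ξ : ℝ,
      (∫ y : ℝ, Real.exp (-(t/2) * (y / t + 2 * π * ξ) ^ 2)) = Real.sqrt (2 * π * t) := by
    intro ξ
    have h1 : (∫ y : ℝ, Real.exp (-(t/2) * (y / t + 2 * π * ξ) ^ 2))
        = |t| • ∫ u : ℝ, Real.exp (-(t/2) * (u + 2 * π * ξ) ^ 2) :=
      MeasureTheory.Measure.integral_comp_div (fun u => Real.exp (-(t/2) * (u + 2 * π * ξ) ^ 2)) t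
    rw [h1, integral_add_right_eq_self (fun u : ℝ => Real.exp (-(t/2) * u ^ 2)) (2 * π * ξ),
      integral_gaussian, smul_eq_mul, abs_of_pos ht]
    rw [show π / (t/2) = 2 * π / t by ring]
    rw [show (2 * π * t : ℝ) = t^2 * (2 * π / t) by field_simp, Real.sqrt_mul (by positivity),
      Real.sqrt_sq ht.le]
  have hP_cont : Continuous P := by
    apply ((hFf_cont.comp continuous_fst).mul ?_).mul ?_
    · exact Complex.continuous_exp.comp
        ((Complex.continuous_ofReal.comp (by fun_prop)).mul continuous_const)
    · exact Complex.continuous_ofReal.comp (by fun_prop)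
  have hP_norm : ∀ p : ℝ × ℝ, ‖P p‖ = ‖Ff p.1‖ * Real.exp (-(t/2) * (p.2 / t + 2 * π * p.1) ^ 2) := by
    intro p
    have h1 : ‖(Complex.exp (((2 * π * (p.1 * x) : ℝ) : ℂ) * Complex.I))‖ = 1 :=
      Complex.norm_exp_ofReal_mul_I _
    simp only [hP_def, norm_mul, h1, Complex.norm_real, Real.norm_eq_abs, mul_one,
      abs_of_pos (Real.exp_pos _)]
  have hP_int : Integrable P (volume.prod volume) := by
    rw [integrable_prod_iff hP_cont.aestronglyMeasurable]
    constructor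
    · refine Filter.Eventually.of_forall fun ξ => ?_
      have := ((gauss_int ξ).ofReal (𝕜 := ℂ)).const_mul
        (Ff ξ * Complex.exp (((2 * π * (ξ * x) : ℝ) : ℂ) * Complex.I))
      simpa [hP_def, mul_assoc] using this
    · have heq : (fun ξ => ∫ y, ‖P (ξ, y)‖)
          = fun ξ => ‖Ff ξ‖ * Real.sqrt (2 * π * t) := by
        funext ξ
        simp only [hP_norm]
        rw [integral_const_mul, gauss_val]
      rw [heq]
      exact hFf_int.norm.mul_const _
  -- pointwise identity
  have key : ∀ y : ℝ, F ((x : ℂ) + Complex.I * (y : ℂ)) *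
        (((Real.exp (-y ^ 2 / (2 * t)) * c) : ℝ) : ℂ)
      = (c : ℂ) * ∫ ξ : ℝ, P (ξ, y) := by
    intro y
    set K : ℂ := (((Real.exp (-y ^ 2 / (2 * t)) * c) : ℝ) : ℂ) with hK
    have hKK : K = Complex.exp (((-y^2/(2*t) : ℝ) : ℂ)) * (c:ℂ) := by
      rw [hK]; push_cast; ring
    set H : ℝ × ℝ → ℂ := fun q =>
      (c:ℂ) * Complex.exp (((-q.1^2/(2*t) : ℝ) : ℂ)) *
        Complex.exp ((((-(q.1 * y / t)) : ℝ) : ℂ) * Complex.I) *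
        (Complex.exp ((((2 * π * (q.2 * (x - q.1))) : ℝ) : ℂ) * Complex.I) * Ff q.2)
      with hH_def
    have hexp : ∀ v : ℝ,
        Complex.exp (-((x:ℂ) + Complex.I * (y:ℂ) - ((x - v : ℝ) : ℂ)) ^ 2 / (2 * (t:ℂ))) *
          Complex.exp (((-y^2/(2*t) : ℝ) : ℂ))
        = Complex.exp (((-v^2/(2*t) : ℝ) : ℂ)) *
            Complex.exp ((((-(v * y / t)) : ℝ) : ℂ) * Complex.I) := by
      intro v
      rw [← Complex.exp_add, ← Complex.exp_add]
      congr 1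
      push_cast
      linear_combination (-(y:ℂ)^2/(2*(t:ℂ))) * Complex.I_sq
    -- continuity of H
    have hH_cont : Continuous H := by
      refine (((continuous_const.mul ?_).mul ?_)).mul
        (Continuous.mul ?_ (hFf_cont.comp continuous_snd))
      · exact Complex.continuous_exp.comp (Complex.continuous_ofReal.comp (by fun_prop))
      · exact Complex.continuous_exp.comp
          ((Complex.continuous_ofReal.comp (by fun_prop)).mul continuous_const)
      · exact Complex.continuous_exp.comp
          ((Complex.continuous_ofReal.comp (by fun_prop)).mul continuous_const)
    -- integrability of H
    have hgauss2 : Integrable (fun v : ℝ => Real.exp (-v^2/(2*t))) := by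
      have h0 : (0:ℝ) < 1/(2*t) := by positivity
      exact (integrable_exp_neg_mul_sq h0).congr
        (Filter.Eventually.of_forall fun v => congrArg Real.exp (by ring))
    have hH_int : Integrable H (volume.prod volume) := by
      refine Integrable.mono' (((hgauss2.const_mul c).mul_prod hFf_int.norm))
        hH_cont.aestronglyMeasurable (Filter.Eventually.of_forall fun q => ?_)
      have h1 : ‖(Complex.exp ((((-(q.1 * y / t)) : ℝ) : ℂ) * Complex.I))‖ = 1 :=
        Complex.norm_exp_ofReal_mul_I _
      have h2 : ‖(Complex.exp ((((2 * π * (q.2 * (x - q.1))) : ℝ) : ℂ) * Complex.I))‖ = 1 :=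
        Complex.norm_exp_ofReal_mul_I _
      have h3 : ‖(Complex.exp (((-q.1^2/(2*t) : ℝ) : ℂ)))‖ = Real.exp (-q.1^2/(2*t)) := by
        rw [Complex.norm_exp, Complex.ofReal_re]
      refine le_of_eq ?_
      simp only [hH_def, norm_mul, h1, h2, h3, mul_one,
        Complex.norm_real, Real.norm_eq_abs, abs_of_pos hc_pos]
      ring
    -- inner integral in v equals P
    have H_inner : ∀ ξ : ℝ, (∫ v : ℝ, H (v, ξ)) = P (ξ, y) := by
      intro ξ
      set b : ℂ := ((-(1/(2*t)) : ℝ) : ℂ) with hb_def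
      have hb : b.re < 0 := by
        rw [hb_def, Complex.ofReal_re]
        have : (0:ℝ) < 1/(2*t) := by positivity
        linarith
      set cc : ℂ := ((-(y/t + 2*π*ξ) : ℝ) : ℂ) * Complex.I with hcc_def
      set d : ℂ := ((2*π*(ξ*x) : ℝ) : ℂ) * Complex.I with hd_def
      have hpt : ∀ v : ℝ, H (v, ξ) = (Ff ξ * (c:ℂ)) * Complex.exp (b * v^2 + cc * v + d) := by
        intro v
        have hexp3 : Complex.exp (((-v^2/(2*t) : ℝ) : ℂ)) *
            Complex.exp ((((-(v * y / t)) : ℝ) : ℂ) * Complex.I) *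
            Complex.exp ((((2 * π * (ξ * (x - v))) : ℝ) : ℂ) * Complex.I)
            = Complex.exp (b * v^2 + cc * v + d) := by
          rw [← Complex.exp_add, ← Complex.exp_add]
          congr 1
          rw [hb_def, hcc_def, hd_def]
          push_cast
          field_simp
          ring
        calc H (v, ξ) = (Ff ξ * (c:ℂ)) * (Complex.exp (((-v^2/(2*t) : ℝ) : ℂ)) *
            Complex.exp ((((-(v * y / t)) : ℝ) : ℂ) * Complex.I) *
            Complex.exp ((((2 * π * (ξ * (x - v))) : ℝ) : ℂ) * Complex.I)) := by
              simp only [hH_def]; ring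
          _ = _ := by rw [hexp3]
      rw [integral_congr_ae (Filter.Eventually.of_forall hpt), integral_const_mul,
        integral_cexp_quadratic hb cc d]
      have hsq : ((π:ℂ) / -b) ^ ((1:ℂ)/2) = ((Real.sqrt (2*π*t) : ℝ) : ℂ) := by
        have h1 : ((π:ℂ) / -b) = (((2*π*t : ℝ)) : ℂ) := by
          rw [hb_def]; push_cast; field_simp
        rw [h1, show ((1:ℂ)/2) = (((1/2 : ℝ)) : ℂ) by norm_num,
          ← Complex.ofReal_cpow h2πt.le, ← Real.sqrt_eq_rpow]
      have hdc : d - cc^2/(4*b) = ((2*π*(ξ*x) : ℝ) : ℂ) * Complex.I +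
          (((-(t/2) * (y/t + 2*π*ξ)^2 : ℝ)) : ℂ) := by
        rw [hb_def, hcc_def, hd_def, mul_pow, Complex.I_sq]
        push_cast
        field_simp
        ring
      rw [hsq, hdc, Complex.exp_add, ← Complex.ofReal_exp]
      have hone : ((c : ℝ) : ℂ) * ((Real.sqrt (2*π*t) : ℝ) : ℂ) = 1 := by
        rw [← Complex.ofReal_mul, hc_sqrt, Complex.ofReal_one]
      calc Ff ξ * (c:ℂ) * (((Real.sqrt (2*π*t) : ℝ) : ℂ) *
            (Complex.exp (((2*π*(ξ*x) : ℝ) : ℂ) * Complex.I) *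
              ((Real.exp (-(t/2) * (y/t + 2*π*ξ)^2) : ℝ) : ℂ)))
          = (((c : ℝ) : ℂ) * ((Real.sqrt (2*π*t) : ℝ) : ℂ)) *
            (Ff ξ * Complex.exp (((2*π*(ξ*x) : ℝ) : ℂ) * Complex.I) *
              ((Real.exp (-(t/2) * (y/t + 2*π*ξ)^2) : ℝ) : ℂ)) := by ring
        _ = P (ξ, y) := by rw [hone, one_mul]
    -- pointwise rewrite of the u-integrand
    have hptwise : ∀ v : ℝ,
        (c:ℂ) * Complex.exp (-((x:ℂ) + Complex.I * (y:ℂ) - ((x - v : ℝ) : ℂ)) ^ 2 / (2 * (t:ℂ))) *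
            f (x - v) * K
        = (c:ℂ) * ∫ ξ : ℝ, H (v, ξ) := by
      intro v
      rw [hinv (x - v), hKK]
      have h4 : (∫ ξ : ℝ, H (v, ξ))
          = ((c:ℂ) * Complex.exp (((-v^2/(2*t) : ℝ) : ℂ)) *
              Complex.exp ((((-(v * y / t)) : ℝ) : ℂ) * Complex.I)) *
            ∫ ξ : ℝ, Complex.exp (((2 * π * (ξ * (x - v)) : ℝ) : ℂ) * Complex.I) * Ff ξ := by
        rw [← integral_const_mul]
      rw [h4]
      linear_combination ((c:ℂ) * (c:ℂ) *
        (∫ ξ : ℝ, Complex.exp (((2 * π * (ξ * (x - v)) : ℝ) : ℂ) * Complex.I) * Ff ξ)) * hexp v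
    -- assemble
    rw [hF]
    rw [← integral_mul_const]
    rw [← integral_sub_left_eq_self
      (fun u : ℝ => (c:ℂ) *
        Complex.exp (-((x:ℂ) + Complex.I * (y:ℂ) - (u : ℂ)) ^ 2 / (2 * (t:ℂ))) * f u * K)
      volume x]
    simp only [hptwise]
    rw [integral_const_mul, integral_integral_swap hH_int]
    congr 1
    exact integral_congr_ae (Filter.Eventually.of_forall fun ξ => H_inner ξ)
  constructor
  · have h1 : Integrable (fun y : ℝ => (c:ℂ) * ∫ ξ : ℝ, P (ξ, y)) :=
      (hP_int.integral_prod_right).const_mul _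
    exact h1.congr (Filter.Eventually.of_forall fun y => (key y).symm)
  · calc (f x : ℂ)
        = ∫ y : ℝ, (c : ℂ) * ∫ ξ : ℝ, P (ξ, y) := by
          have inner2 : ∀ ξ : ℝ, (∫ y : ℝ, P (ξ, y))
              = Ff ξ * Complex.exp (((2*π*(ξ*x) : ℝ) : ℂ) * Complex.I) *
                ((Real.sqrt (2*π*t) : ℝ) : ℂ) := by
            intro ξ
            have h6 : (∫ y : ℝ, P (ξ, y))
                = (Ff ξ * Complex.exp (((2*π*(ξ*x) : ℝ) : ℂ) * Complex.I)) *
                  ∫ y : ℝ, ((Real.exp (-(t/2) * (y/t + 2*π*ξ)^2) : ℝ) : ℂ) := by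
              rw [← integral_const_mul]
            have h7 : (∫ y : ℝ, ((Real.exp (-(t/2) * (y/t + 2*π*ξ)^2) : ℝ) : ℂ))
                = (((∫ y : ℝ, Real.exp (-(t/2) * (y/t + 2*π*ξ)^2)) : ℝ) : ℂ) := by
              have h8 := Complex.ofRealCLM.integral_comp_comm (gauss_int ξ)
              simpa using h8
            rw [h6, h7, gauss_val ξ]
          have swap2 := integral_integral_swap (f := fun ξ y => P (ξ, y)) hP_int
          rw [integral_const_mul, ← swap2]
          rw [integral_congr_ae (Filter.Eventually.of_forall inner2)]
          rw [integral_mul_const]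
          have h5 : (∫ ξ : ℝ, Ff ξ * Complex.exp (((2*π*(ξ*x) : ℝ) : ℂ) * Complex.I))
              = f x := by
            rw [hinv x]
            exact integral_congr_ae (Filter.Eventually.of_forall fun ξ => by ring)
          rw [h5]
          have hone : ((c : ℝ) : ℂ) * ((Real.sqrt (2*π*t) : ℝ) : ℂ) = 1 := by
            rw [← Complex.ofReal_mul, hc_sqrt, Complex.ofReal_one]
          linear_combination (-(f x : ℂ)) * hone
      _ = _ := by
          refine integral_congr_ae (Filter.Eventually.of_forall fun y => ?_)
          exact (key y).symm
end

section
/- If F : ℂ → ℂ is holomorphic with an isolated singularity at z₀ and F is square-integrable with respect to Lebesgue area measure on some punctured neighborhood of z₀, then the singularity at z₀ is removable. -/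
open MeasureTheory Metric

section Aux
open Real Set intervalIntegral Filter Topology
open scoped ENNReal NNReal

private 
lemma circle_submean (f : ℂ → ℂ) (c : ℂ) (ρ : ℝ) (hρ : 0 < ρ)
    (hf : DifferentiableOn ℂ f (closedBall c ρ)) :
    2 * π * ‖f c‖ ^ 2 ≤ ∫ θ in (0:ℝ)..(2*π), ‖f (circleMap c ρ θ)‖ ^ 2 := by
  have hff : DifferentiableOn ℂ (fun z => f z * f z) (closedBall c ρ) := hf.mul hf
  have h1 := hff.circleIntegral_sub_inv_smul (mem_ball_self hρ)
  have h2 : (∮ z in C(c, ρ), (z - c)⁻¹ • (f z * f z))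
      = Complex.I • ∫ θ in (0:ℝ)..(2*π), f (circleMap c ρ θ) * f (circleMap c ρ θ) := by
    rw [circleIntegral, ← intervalIntegral.integral_smul]
    refine intervalIntegral.integral_congr fun θ _ => ?_
    have hne : circleMap 0 ρ θ ≠ 0 := by
      simpa using circleMap_ne_center (c := 0) hρ.ne' (θ := θ)
    simp only [deriv_circleMap, circleMap_sub_center, smul_smul, smul_eq_mul]
    field_simp
  rw [h2] at h1
  have h3 : (∫ θ in (0:ℝ)..(2*π), f (circleMap c ρ θ) * f (circleMap c ρ θ))
      = (2 * (π:ℂ)) * (f c * f c) := by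
    rw [smul_eq_mul, smul_eq_mul] at h1
    refine mul_left_cancel₀ Complex.I_ne_zero ?_
    rw [h1]; ring
  have h4 : ‖f c * f c‖ = ‖f c‖ ^ 2 := by rw [norm_mul]; ring
  have h5 : (2 * π) * ‖f c‖ ^ 2
      = ‖∫ θ in (0:ℝ)..(2*π), f (circleMap c ρ θ) * f (circleMap c ρ θ)‖ := by
    rw [h3, norm_mul, h4]
    norm_num [Complex.norm_real, abs_of_pos Real.pi_pos]
  rw [h5]
  calc ‖∫ θ in (0:ℝ)..(2*π), f (circleMap c ρ θ) * f (circleMap c ρ θ)‖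
      ≤ ∫ θ in (0:ℝ)..(2*π), ‖f (circleMap c ρ θ) * f (circleMap c ρ θ)‖ :=
        intervalIntegral.norm_integral_le_integral_norm (by positivity)
    _ = ∫ θ in (0:ℝ)..(2*π), ‖f (circleMap c ρ θ)‖ ^ 2 := by
        refine intervalIntegral.integral_congr fun θ _ => ?_
        rw [norm_mul]; ring

private lemma area_submean (f : ℂ → ℂ) (c : ℂ) (s : ℝ) (hs : 0 < s)
    (hf : DifferentiableOn ℂ f (ball c s))
    (hi : IntegrableOn (fun z => ‖f z‖ ^ 2) (ball c s) volume) :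
    π * s ^ 2 * ‖f c‖ ^ 2 ≤ ∫ z in ball c s, ‖f z‖ ^ 2 := by
  set g : ℂ → ℝ := fun z => ‖f (c + z)‖ ^ 2 with hg
  set h : ℂ → ℝ := (ball (0:ℂ) s).indicator g with hh
  have hball : ∀ z : ℂ, c + z ∈ ball c s ↔ z ∈ ball (0:ℂ) s := by
    intro z; simp [mem_ball, dist_eq_norm]
  have hcomp : ∀ z : ℂ, ((ball c s).indicator (fun w => ‖f w‖ ^ 2)) (c + z) = h z := by
    intro z
    by_cases hz : z ∈ ball (0:ℂ) s
    · rw [hh, Set.indicator_of_mem hz, Set.indicator_of_mem ((hball z).2 hz)]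
    · rw [hh, Set.indicator_of_notMem hz,
        Set.indicator_of_notMem (fun hcz => hz ((hball z).1 hcz))]
  have h0le : ∀ z, 0 ≤ h z := fun z =>
    Set.indicator_nonneg (fun w _ => by positivity) z
  have hIh : Integrable h := by
    have h1 : Integrable ((ball c s).indicator fun z => ‖f z‖ ^ 2) :=
      (integrable_indicator_iff measurableSet_ball).2 hi
    have h2 := h1.comp_add_left c
    exact h2.congr (Filter.Eventually.of_forall hcomp)
  have hint : (∫ z in ball c s, ‖f z‖ ^ 2) = ∫ z, h z := by
    rw [← MeasureTheory.integral_indicator measurableSet_ball,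
      ← integral_add_left_eq_self ((ball c s).indicator fun z => ‖f z‖ ^ 2) c]
    exact integral_congr_ae (Filter.Eventually.of_forall hcomp)
  -- polar coordinates
  set F : ℝ × ℝ → ℝ := fun p => p.1 • h (Complex.polarCoord.symm p) with hF
  have hpolar : (∫ z, h z) = ∫ p in polarCoord.target, F p :=
    (Complex.integral_comp_polarCoord_symm h).symm
  -- integrability of F on the target
  set B : ℝ × ℝ → ℝ × ℝ →L[ℝ] ℝ × ℝ := fun p =>
    LinearMap.toContinuousLinearMap (Matrix.toLin (Module.Basis.finTwoProd ℝ) (Module.Basis.finTwoProd ℝ)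
      !![Real.cos p.2, -p.1 * Real.sin p.2; Real.sin p.2, p.1 * Real.cos p.2]) with hB
  have B_det : ∀ p, (B p).det = p.1 := by
    intro p
    conv_rhs => rw [← one_mul p.1, ← cos_sq_add_sin_sq p.2]
    simp only [hB, neg_mul, LinearMap.det_toContinuousLinearMap, LinearMap.det_toLin,
      Matrix.det_fin_two_of, sub_neg_eq_add]
    ring
  have hh' : Integrable (fun q : ℝ × ℝ => h (Complex.measurableEquivRealProd.symm q)) :=
    ((MeasurePreserving.symm _ Complex.volume_preserving_equiv_real_prod).integrable_comp_emb
      Complex.measurableEquivRealProd.symm.measurableEmbedding).2 hIh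
  have hIT : IntegrableOn F polarCoord.target := by
    have hiff := integrableOn_image_iff_integrableOn_abs_det_fderiv_smul volume
      polarCoord.open_target.measurableSet
      (fun p _ => (hasFDerivAt_polarCoord_symm p).hasFDerivWithinAt)
      (polarCoord.symm.injOn)
      (fun q : ℝ × ℝ => h (Complex.measurableEquivRealProd.symm q))
    have h1 : IntegrableOn (fun p : ℝ × ℝ =>
        |(B p).det| • h (Complex.measurableEquivRealProd.symm (polarCoord.symm p)))
        polarCoord.target := by
      simpa only [det_fderivPolarCoordSymm, B_det] using hiff.1 hh'.integrableOn
    refine h1.congr_fun (fun p hp => ?_) polarCoord.open_target.measurableSet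
    have : Complex.measurableEquivRealProd.symm (polarCoord.symm p)
        = Complex.polarCoord.symm p := rfl
    beta_reduce; rw [this, B_det, abs_of_pos hp.1]
  -- restrict to smaller rectangle
  set T' : Set (ℝ × ℝ) := Ioo (0:ℝ) s ×ˢ Ioo (-π) π with hT'
  have hsub : T' ⊆ polarCoord.target := by
    rw [polarCoord_target]
    exact Set.prod_mono Ioo_subset_Ioi_self subset_rfl
  have hIT' : IntegrableOn F T' := hIT.mono_set hsub
  have hFnn : 0 ≤ᵐ[volume.restrict polarCoord.target] F := by
    refine (ae_restrict_iff' polarCoord.open_target.measurableSet).2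
      (Filter.Eventually.of_forall fun p hp => ?_)
    have hp1 : (0:ℝ) < p.1 := hp.1
    simpa [hF, smul_eq_mul] using mul_nonneg hp1.le (h0le _)
  have key1 : ∫ p in T', F p ≤ ∫ p in polarCoord.target, F p :=
    setIntegral_mono_set hIT hFnn (HasSubset.Subset.eventuallyLE hsub)
  have hprodI : Integrable F
      ((volume.restrict (Ioo (0:ℝ) s)).prod (volume.restrict (Ioo (-π) π))) := by
    rw [Measure.prod_restrict, ← Measure.volume_eq_prod]; exact hIT'
  have key2 : ∫ p in T', F p = ∫ ρ in Ioo (0:ℝ) s, ∫ θ in Ioo (-π) π, F (ρ, θ) := by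
    rw [hT', Measure.volume_eq_prod, ← Measure.prod_restrict]
    exact integral_prod F hprodI
  have houter1 : Integrable (fun ρ => ∫ θ in Ioo (-π) π, F (ρ, θ))
      (volume.restrict (Ioo (0:ℝ) s)) := hprodI.integral_prod_left
  have houter2 : IntegrableOn (fun ρ : ℝ => 2 * π * ‖f c‖ ^ 2 * ρ) (Ioo (0:ℝ) s) :=
    (continuous_const.mul continuous_id).integrableOn_Icc.mono_set Ioo_subset_Icc_self
  have inner : ∀ ρ ∈ Ioo (0:ℝ) s,
      2 * π * ‖f c‖ ^ 2 * ρ ≤ ∫ θ in Ioo (-π) π, F (ρ, θ) := by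
    rintro ρ ⟨hρ, hρs⟩
    have hcb : DifferentiableOn ℂ f (closedBall c ρ) := hf.mono (closedBall_subset_ball hρs)
    have hmem : ∀ θ : ℝ, Complex.polarCoord.symm (ρ, θ) ∈ ball (0:ℂ) s := by
      intro θ
      rw [mem_ball_zero_iff]
      calc ‖Complex.polarCoord.symm (ρ, θ)‖ = |ρ| := Complex.norm_polarCoord_symm (ρ, θ)
        _ < s := by rwa [abs_of_pos hρ]
    have hFθ : ∀ θ : ℝ, F (ρ, θ) = ρ * ‖f (circleMap c ρ θ)‖ ^ 2 := by
      intro θ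
      have h2 : c + Complex.polarCoord.symm (ρ, θ) = circleMap c ρ θ := by
        simp only [Complex.polarCoord_symm_apply, circleMap, Complex.exp_mul_I]
        push_cast; ring
      rw [hF]
      simp only [smul_eq_mul]
      congr 1
      rw [hh, Set.indicator_of_mem (hmem θ), hg]
      simp only [h2]
    have hper : Function.Periodic (fun θ : ℝ => ‖f (circleMap c ρ θ)‖ ^ 2) (2 * π) :=
      (periodic_circleMap c ρ).comp fun z => ‖f z‖ ^ 2
    have hshift := hper.intervalIntegral_add_eq (-π) 0
    have hval : (∫ θ in Ioo (-π) π, ‖f (circleMap c ρ θ)‖ ^ 2)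
        = ∫ θ in (0:ℝ)..(2*π), ‖f (circleMap c ρ θ)‖ ^ 2 := by
      rw [← MeasureTheory.integral_Ioc_eq_integral_Ioo,
        ← intervalIntegral.integral_of_le (by linarith [pi_pos] : (-π:ℝ) ≤ π)]
      have : -π + 2 * π = π := by ring
      rw [this] at hshift
      rw [hshift, zero_add]
    calc 2 * π * ‖f c‖ ^ 2 * ρ = ρ * (2 * π * ‖f c‖ ^ 2) := by ring
      _ ≤ ρ * ∫ θ in (0:ℝ)..(2*π), ‖f (circleMap c ρ θ)‖ ^ 2 :=
          mul_le_mul_of_nonneg_left (circle_submean f c ρ hρ hcb) hρ.le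
      _ = ∫ θ in Ioo (-π) π, ρ * ‖f (circleMap c ρ θ)‖ ^ 2 := by
          rw [MeasureTheory.integral_const_mul, hval]
      _ = ∫ θ in Ioo (-π) π, F (ρ, θ) := by
          exact setIntegral_congr_fun measurableSet_Ioo fun θ _ => (hFθ θ).symm
  have key3 : ∫ ρ in Ioo (0:ℝ) s, (2 * π * ‖f c‖ ^ 2 * ρ)
      ≤ ∫ ρ in Ioo (0:ℝ) s, ∫ θ in Ioo (-π) π, F (ρ, θ) :=
    setIntegral_mono_on houter2 houter1 measurableSet_Ioo inner
  have key4 : ∫ ρ in Ioo (0:ℝ) s, (2 * π * ‖f c‖ ^ 2 * ρ) = π * s ^ 2 * ‖f c‖ ^ 2 := by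
    rw [← MeasureTheory.integral_Ioc_eq_integral_Ioo,
      ← intervalIntegral.integral_of_le hs.le, intervalIntegral.integral_const_mul, integral_id]
    ring
  rw [hint, hpolar]
  calc π * s ^ 2 * ‖f c‖ ^ 2 = ∫ ρ in Ioo (0:ℝ) s, (2 * π * ‖f c‖ ^ 2 * ρ) := key4.symm
    _ ≤ ∫ ρ in Ioo (0:ℝ) s, ∫ θ in Ioo (-π) π, F (ρ, θ) := key3
    _ = ∫ p in T', F p := key2.symm
    _ ≤ ∫ p in polarCoord.target, F p := key1

end Aux

section Main
open Real Set intervalIntegral Filter Topology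
open scoped ENNReal NNReal

/-- An isolated singularity of a holomorphic function that is
square-integrable for planar Lebesgue measure on a punctured neighborhood is
removable. -/
theorem L2_isolated_singularity_removable
    (F : ℂ → ℂ) (z₀ : ℂ) (r : ℝ) (hr : 0 < r)
    (hF : DifferentiableOn ℂ F (ball z₀ r \ {z₀}))
    (hL2 : IntegrableOn (fun z => ‖F z‖ ^ 2) (ball z₀ r \ {z₀})
      (volume : Measure ℂ)) :
    ∃ g : ℂ → ℂ, DifferentiableOn ℂ g (ball z₀ r) ∧
      ∀ z ∈ ball z₀ r \ {z₀}, g z = F z := by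
  set S : Set ℂ := ball z₀ r \ {z₀} with hS
  set f' : ℂ → ℝ := S.indicator (fun z => ‖F z‖ ^ 2) with hf'
  have hf'nn : ∀ z, 0 ≤ f' z := fun z => Set.indicator_nonneg (fun w _ => by positivity) z
  have hf'meas : MeasurableSet S := measurableSet_ball.diff (measurableSet_singleton z₀)
  have hf'int : Integrable f' := (integrable_indicator_iff hf'meas).2 hL2
  set G : ℂ → ℝ := fun z => ∫ w in closedBall z₀ (3 * dist z z₀ / 2), f' w with hG
  -- G tends to 0
  have hd0 : Tendsto (fun z : ℂ => dist z z₀) (𝓝[≠] z₀) (𝓝 0) := by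
    have : Tendsto (fun z : ℂ => dist z z₀) (𝓝 z₀) (𝓝 (dist z₀ z₀)) :=
      (continuous_id.dist continuous_const).tendsto z₀
    rw [dist_self] at this
    exact this.mono_left nhdsWithin_le_nhds
  have hmeas0 : Tendsto (fun z : ℂ => volume (closedBall z₀ (3 * dist z z₀ / 2)))
      (𝓝[≠] z₀) (𝓝 0) := by
    have h1 : Tendsto (fun d : ℝ => ENNReal.ofReal ((3 * d / 2) ^ 2)) (𝓝 0) (𝓝 0) := by
      have hc : Continuous (fun d : ℝ => ENNReal.ofReal ((3 * d / 2) ^ 2)) :=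
        ENNReal.continuous_ofReal.comp (by continuity)
      simpa using hc.tendsto 0
    have h2 := ENNReal.Tendsto.mul_const h1 (Or.inr ENNReal.coe_ne_top) (b := (NNReal.pi : ℝ≥0∞))
    rw [zero_mul] at h2
    have h3 := h2.comp hd0
    refine h3.congr fun z => ?_
    simp only [Function.comp]
    rw [Complex.volume_closedBall, ← ENNReal.ofReal_pow (by positivity)]
  have hGto : Tendsto G (𝓝[≠] z₀) (𝓝 0) :=
    hf'int.tendsto_setIntegral_nhds_zero hmeas0
  -- the squeeze function
  set u : ℂ → ℝ := fun z => Real.sqrt (4 / π * G z) with hu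
  have huto : Tendsto u (𝓝[≠] z₀) (𝓝 0) := by
    have hc : Continuous (fun x : ℝ => Real.sqrt (4 / π * x)) :=
      Real.continuous_sqrt.comp (by continuity)
    have := (hc.tendsto 0).comp hGto
    simp only [mul_zero, Real.sqrt_zero] at this; exact this
  -- the key bound
  have hbound : ∀ᶠ z in 𝓝[≠] z₀, ‖(z - z₀) * F z‖ ≤ u z := by
    have hball : ball z₀ (r / 2) ∈ 𝓝 z₀ := ball_mem_nhds z₀ (by positivity)
    filter_upwards [self_mem_nhdsWithin, nhdsWithin_le_nhds hball] with z hz hzball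
    have hzne : z ≠ z₀ := hz
    set d : ℝ := dist z z₀ with hdd
    have hd : 0 < d := dist_pos.2 hzne
    have hdr : d < r / 2 := mem_ball.1 hzball
    have hsub1 : ball z (d / 2) ⊆ S := by
      intro w hw
      have hw1 : dist w z < d / 2 := mem_ball.1 hw
      constructor
      · rw [mem_ball]
        calc dist w z₀ ≤ dist w z + dist z z₀ := dist_triangle _ _ _
          _ < d / 2 + d := by linarith
          _ < r := by linarith
      · intro hwz
        rw [Set.mem_singleton_iff] at hwz
        subst hwz
        rw [dist_comm] at hw1
        rw [hdd] at hw1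
        linarith
    have hsub2 : ball z (d / 2) ⊆ closedBall z₀ (3 * d / 2) := by
      intro w hw
      have hw1 : dist w z < d / 2 := mem_ball.1 hw
      rw [mem_closedBall]
      calc dist w z₀ ≤ dist w z + dist z z₀ := dist_triangle _ _ _
        _ ≤ 3 * d / 2 := by linarith
    have hstep := area_submean F z (d / 2) (by positivity) (hF.mono hsub1)
      (hL2.mono_set hsub1)
    have hcongr : (∫ w in ball z (d / 2), ‖F w‖ ^ 2) = ∫ w in ball z (d / 2), f' w := by
      refine setIntegral_congr_fun measurableSet_ball fun w hw => ?_
      rw [hf', Set.indicator_of_mem (hsub1 hw)]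
    have hmono : (∫ w in ball z (d / 2), f' w) ≤ G z :=
      setIntegral_mono_set hf'int.integrableOn
        (Filter.Eventually.of_forall hf'nn) (HasSubset.Subset.eventuallyLE hsub2)
    have hkey : π * (d / 2) ^ 2 * ‖F z‖ ^ 2 ≤ G z := by
      calc π * (d / 2) ^ 2 * ‖F z‖ ^ 2 ≤ ∫ w in ball z (d / 2), ‖F w‖ ^ 2 := hstep
        _ = ∫ w in ball z (d / 2), f' w := hcongr
        _ ≤ G z := hmono
    have hnorm : ‖(z - z₀) * F z‖ = d * ‖F z‖ := by
      rw [norm_mul, ← dist_eq_norm]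
    rw [hnorm, hu]
    simp only
    have hsq : (d * ‖F z‖) ^ 2 ≤ 4 / π * G z := by
      have hpi : (0:ℝ) < π := Real.pi_pos
      rw [div_mul_eq_mul_div, le_div_iff₀ hpi]
      nlinarith [hkey]
    have hnn : 0 ≤ d * ‖F z‖ := by positivity
    have hGnn : (0:ℝ) ≤ G z := integral_nonneg fun w => hf'nn w
    exact (Real.le_sqrt hnn (by positivity)).2 hsq
  have T1 : Tendsto (fun z => (z - z₀) * F z) (𝓝[≠] z₀) (𝓝 0) :=
    squeeze_zero_norm' hbound huto
  have T2 : Tendsto (fun z => (z - z₀) * F z₀) (𝓝[≠] z₀) (𝓝 0) := by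
    have : Tendsto (fun z : ℂ => (z - z₀) * F z₀) (𝓝 z₀) (𝓝 ((z₀ - z₀) * F z₀)) :=
      ((continuous_id.sub continuous_const).mul continuous_const).tendsto z₀
    simpa using this.mono_left nhdsWithin_le_nhds
  have ho : (fun z => F z - F z₀) =o[𝓝[≠] z₀] fun z => (z - z₀)⁻¹ := by
    rw [Asymptotics.isLittleO_iff_tendsto']
    · have := T1.sub T2
      rw [sub_zero] at this
      refine Tendsto.congr (fun z => ?_) this
      rw [div_inv_eq_mul]
      ring
    · filter_upwards [self_mem_nhdsWithin] with z hz h0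
      exact absurd (inv_eq_zero.1 h0) (sub_ne_zero.2 hz)
  refine ⟨_, Complex.differentiableOn_update_limUnder_of_isLittleO
    (ball_mem_nhds z₀ hr) hF ho, fun z hz => Function.update_of_ne hz.2 _ _⟩

end Main
end

section
/- Eskin–Urakawa heat kernel formula on SU(2) ≅ S³: for t > 0 and θ ∈ ℝ with sin θ ≠ 0, the function ρ_t(θ) = e^{t/2} (2πt)^{-3/2} Σ_{n∈ℤ} ((θ + 2πn)/ sin(θ + 2πn)) e^{-(θ+2πn)²/(2t)} (where sin(θ+2πn) = sin θ) satisfies the radial heat equation on S³: ∂ρ_t/∂t = ½ ( ∂²ρ_t/∂θ² + 2 cot(θ) ∂ρ_t/∂θ ). -/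
open Real

lemma summable_aux_nat (a B : ℝ) (ha : 0 < a) (hB : 0 ≤ B) (k : ℕ) :
    Summable (fun m : ℕ => (B + 2*π*(m:ℝ))^k * Real.exp (-(a * (m:ℝ)^2))) := by
  have hr : ‖Real.exp (-a)‖ < 1 := by
    rw [Real.norm_eq_abs, abs_of_pos (Real.exp_pos _)]
    exact Real.exp_lt_one_iff.2 (by linarith)
  have h1 : Summable (fun m : ℕ => ((m:ℝ))^k * (Real.exp (-a))^m) :=
    summable_pow_mul_geometric_of_norm_lt_one k hr
  have h2 : Summable (fun m : ℕ => (((m:ℝ))+1)^k * (Real.exp (-a))^(m+1)) := by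
    have := (summable_nat_add_iff 1).2 h1
    simpa using this
  have h3 : Summable (fun m : ℕ => (B + 2*π)^k * ((((m:ℝ))+1)^k * (Real.exp (-a))^m)) := by
    have := (h2.mul_right (Real.exp (-a))⁻¹).mul_left ((B + 2*π)^k)
    apply this.congr
    intro m
    have : (Real.exp (-a))^(m+1) * (Real.exp (-a))⁻¹ = (Real.exp (-a))^m := by
      rw [pow_succ]
      field_simp
    rw [mul_assoc, this]
  apply Summable.of_nonneg_of_le _ _ h3
  · intro m
    positivity
  · intro m
    have hb1 : (0:ℝ) ≤ B + 2*π*(m:ℝ) := by positivity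
    have hb2 : B + 2*π*(m:ℝ) ≤ (B + 2*π) * ((m:ℝ)+1) := by nlinarith [pi_pos, Nat.cast_nonneg (α := ℝ) m]
    have hp : (B + 2*π*(m:ℝ))^k ≤ ((B + 2*π) * ((m:ℝ)+1))^k := pow_le_pow_left₀ hb1 hb2 k
    have he : Real.exp (-(a * (m:ℝ)^2)) ≤ (Real.exp (-a))^m := by
      rw [← Real.exp_nat_mul]
      apply Real.exp_le_exp.2
      have : (m:ℝ) ≤ (m:ℝ)^2 := by exact_mod_cast Nat.le_self_pow two_ne_zero m
      nlinarith
    calc (B + 2*π*(m:ℝ))^k * Real.exp (-(a * (m:ℝ)^2))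
        ≤ ((B + 2*π) * ((m:ℝ)+1))^k * (Real.exp (-a))^m := by
          apply mul_le_mul hp he (Real.exp_pos _).le (by positivity)
      _ = (B + 2*π)^k * (((m:ℝ)+1)^k * (Real.exp (-a))^m) := by rw [mul_pow]; ring

lemma summable_aux_int (a B : ℝ) (ha : 0 < a) (hB : 0 ≤ B) (k : ℕ) :
    Summable (fun n : ℤ => (B + 2*π*|(n:ℝ)|)^k * Real.exp (-(a * (n:ℝ)^2))) := by
  apply Summable.of_nat_of_neg_add_one
  · have := summable_aux_nat a B ha hB k
    apply this.congr
    intro m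
    simp
  · have := (summable_nat_add_iff 1).2 (summable_aux_nat a B ha hB k)
    apply this.congr
    intro m
    push_cast
    rw [abs_of_nonpos (by push_cast; linarith [Nat.cast_nonneg (α := ℝ) m])]
    push_cast
    ring_nf

lemma term_bound (a B x : ℝ) (ha : 0 < a) (hB : |x| ≤ B) (k : ℕ) (n : ℤ) :
    |x + 2*π*n| ^ k * Real.exp (-(x + 2*π*n)^2 * a) ≤
      Real.exp (B^2 * a) * ((B + 2*π*|(n:ℝ)|) ^ k * Real.exp (-(2*π^2*a) * (n:ℝ)^2)) := by
  have h1 : |x + 2*π*n| ≤ B + 2*π*|(n:ℝ)| := by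
    calc |x + 2*π*n| ≤ |x| + |2*π*(n:ℝ)| := abs_add_le _ _
      _ ≤ B + 2*π*|(n:ℝ)| := by
          rw [abs_mul, abs_of_pos (by positivity : (0:ℝ) < 2*π)]
          linarith
  have hx2 : x^2 ≤ B^2 := by
    have := abs_nonneg x
    nlinarith [sq_abs x]
  have h2 : Real.exp (-(x + 2*π*n)^2 * a) ≤ Real.exp (B^2*a) * Real.exp (-(2*π^2*a) * (n:ℝ)^2) := by
    rw [← Real.exp_add]
    apply Real.exp_le_exp.2
    nlinarith [sq_nonneg (2*π*(n:ℝ) + 2*x)]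
  calc |x + 2*π*n| ^ k * Real.exp (-(x + 2*π*n)^2 * a)
      ≤ (B + 2*π*|(n:ℝ)|) ^ k * (Real.exp (B^2*a) * Real.exp (-(2*π^2*a) * (n:ℝ)^2)) := by
        have hB0 : (0:ℝ) ≤ B := le_trans (abs_nonneg x) hB
        exact mul_le_mul (pow_le_pow_left₀ (abs_nonneg _) h1 k) h2 (Real.exp_pos _).le
          (pow_nonneg (by positivity) k)
    _ = _ := by ring
open Real

lemma hasDerivAt_pterm (t c : ℝ) (ht : t ≠ 0) (x : ℝ) :
    HasDerivAt (fun y : ℝ => (y + c) * Real.exp (-(y + c)^2 / (2*t)))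
      ((1 - (x + c)^2/t) * Real.exp (-(x + c)^2/(2*t))) x := by
  have h1 : HasDerivAt (fun y : ℝ => y + c) 1 x := (hasDerivAt_id x).add_const c
  have h2 : HasDerivAt (fun y : ℝ => -(y + c)^2 / (2*t))
      (-(2 * (x + c)^1 * 1) / (2*t)) x := ((h1.pow 2).neg).div_const (2*t)
  have hE := h2.exp
  have := h1.mul hE
  refine this.congr_deriv ?_
  field_simp
  ring

lemma hasDerivAt_qterm (t c : ℝ) (ht : t ≠ 0) (x : ℝ) :
    HasDerivAt (fun y : ℝ => (1 - (y + c)^2/t) * Real.exp (-(y + c)^2 / (2*t)))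
      (((x + c)^3/t^2 - 3*(x + c)/t) * Real.exp (-(x + c)^2/(2*t))) x := by
  have h1 : HasDerivAt (fun y : ℝ => y + c) 1 x := (hasDerivAt_id x).add_const c
  have h2 : HasDerivAt (fun y : ℝ => -(y + c)^2 / (2*t))
      (-(2 * (x + c)^1 * 1) / (2*t)) x := ((h1.pow 2).neg).div_const (2*t)
  have h3 : HasDerivAt (fun y : ℝ => 1 - (y + c)^2/t)
      (0 - (2 * (x + c)^1 * 1)/t) x := (hasDerivAt_const x 1).sub ((h1.pow 2).div_const t)
  have hE := h2.exp
  have := h3.mul hE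
  refine this.congr_deriv ?_
  field_simp
  ring

lemma hasDerivAt_tterm (c θ : ℝ) {t : ℝ} (ht : 0 < t) :
    HasDerivAt (fun τ : ℝ => (θ + c) * Real.exp (-(θ + c)^2 / (2*τ)))
      ((θ + c)^3 / (2*t^2) * Real.exp (-(θ + c)^2/(2*t))) t := by
  have h2t : (2*t) ≠ 0 := by positivity
  have h1 : HasDerivAt (fun τ : ℝ => 2*τ) 2 t := by
    simpa using (hasDerivAt_id t).const_mul 2
  have h2 : HasDerivAt (fun τ : ℝ => -(θ + c)^2 / (2*τ))
      ((0 * (2*t) - (-(θ + c)^2) * 2) / (2*t)^2) t :=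
    (hasDerivAt_const t (-(θ + c)^2)).div h1 h2t
  have hE := h2.exp
  have := hE.const_mul (θ + c)
  refine this.congr_deriv ?_
  field_simp
  ring
noncomputable def bnd (t B : ℝ) (k : ℕ) (n : ℤ) : ℝ :=
  Real.exp (B^2 * (1/(2*t))) * ((B + 2*π*|(n:ℝ)|) ^ k * Real.exp (-(2*π^2*(1/(2*t))) * (n:ℝ)^2))

lemma bnd_nonneg (t B : ℝ) (k : ℕ) (n : ℤ) (hB : 0 ≤ B) : 0 ≤ bnd t B k n := by
  unfold bnd; positivity

lemma summable_bnd (t B : ℝ) (ht : 0 < t) (hB : 0 ≤ B) (k : ℕ) : Summable (bnd t B k) := by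
  unfold bnd
  have h := (summable_aux_int (2*π^2*(1/(2*t))) B (by positivity) hB k).mul_left
    (Real.exp (B^2 * (1/(2*t))))
  apply h.congr
  intro n
  rw [neg_mul]

lemma E_bound (t B y : ℝ) (ht : 0 < t) (hy : |y| ≤ B) (k : ℕ) (n : ℤ) :
    |y + 2*π*n| ^ k * Real.exp (-(y + 2*π*n)^2 / (2*t)) ≤ bnd t B k n := by
  have h : -(y + 2*π*n)^2 / (2*t) = -(y + 2*π*n)^2 * (1/(2*t)) := by ring
  rw [h]; exact term_bound _ _ _ (by positivity) hy k n

lemma summable_pterm (t θ : ℝ) (ht : 0 < t) :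
    Summable (fun n : ℤ => (θ + 2*π*n) * Real.exp (-(θ + 2*π*n)^2 / (2*t))) := by
  apply Summable.of_norm_bounded (g := bnd t |θ| 1) (summable_bnd t _ ht (abs_nonneg θ) 1)
  intro n
  rw [Real.norm_eq_abs, abs_mul, abs_of_pos (Real.exp_pos _)]
  simpa using E_bound t |θ| θ ht le_rfl 1 n

lemma qterm_bound (t B y : ℝ) (ht : 0 < t) (hy : |y| ≤ B) (n : ℤ) :
    |(1 - (y + 2*π*n)^2/t) * Real.exp (-(y + 2*π*n)^2/(2*t))| ≤
      bnd t B 0 n + (1/t) * bnd t B 2 n := by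
  rw [abs_mul, abs_of_pos (Real.exp_pos _)]
  set v := y + 2*π*n with hv
  have h1 : |1 - v^2/t| ≤ 1 + v^2/t := by
    have : (0:ℝ) ≤ v^2/t := by positivity
    rw [abs_sub_comm]
    calc |v^2/t - 1| ≤ |v^2/t| + |(1:ℝ)| := abs_sub _ _
      _ = v^2/t + 1 := by rw [abs_of_nonneg this]; simp
      _ = 1 + v^2/t := by ring
  have hE : (0:ℝ) < Real.exp (-v^2/(2*t)) := Real.exp_pos _
  have h0 : Real.exp (-v^2/(2*t)) ≤ bnd t B 0 n := by
    simpa using E_bound t B y ht hy 0 n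
  have h2 : v^2 * Real.exp (-v^2/(2*t)) ≤ bnd t B 2 n := by
    have := E_bound t B y ht hy 2 n
    rwa [sq_abs] at this
  calc |1 - v^2/t| * Real.exp (-v^2/(2*t)) ≤ (1 + v^2/t) * Real.exp (-v^2/(2*t)) :=
        mul_le_mul_of_nonneg_right h1 hE.le
    _ = Real.exp (-v^2/(2*t)) + (1/t) * (v^2 * Real.exp (-v^2/(2*t))) := by ring
    _ ≤ bnd t B 0 n + (1/t) * bnd t B 2 n := by
        have h1t : (0:ℝ) ≤ 1/t := by positivity
        gcongr

lemma rterm_bound (t B y : ℝ) (ht : 0 < t) (hy : |y| ≤ B) (n : ℤ) :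
    |((y + 2*π*n)^3/t^2 - 3*(y + 2*π*n)/t) * Real.exp (-(y + 2*π*n)^2/(2*t))| ≤
      (1/t^2) * bnd t B 3 n + (3/t) * bnd t B 1 n := by
  rw [abs_mul, abs_of_pos (Real.exp_pos _)]
  set v := y + 2*π*n with hv
  have h1 : |v^3/t^2 - 3*v/t| ≤ |v|^3/t^2 + 3*|v|/t := by
    calc |v^3/t^2 - 3*v/t| ≤ |v^3/t^2| + |3*v/t| := abs_sub _ _
      _ = |v|^3/t^2 + 3*|v|/t := by
          rw [abs_div, abs_div, abs_pow, abs_mul]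
          rw [abs_of_pos ht, abs_of_pos (by positivity : (0:ℝ) < t^2)]
          norm_num
  have hE : (0:ℝ) < Real.exp (-v^2/(2*t)) := Real.exp_pos _
  have h3 : |v|^3 * Real.exp (-v^2/(2*t)) ≤ bnd t B 3 n := E_bound t B y ht hy 3 n
  have h1' : |v|^1 * Real.exp (-v^2/(2*t)) ≤ bnd t B 1 n := E_bound t B y ht hy 1 n
  rw [pow_one] at h1'
  calc |v^3/t^2 - 3*v/t| * Real.exp (-v^2/(2*t))
      ≤ (|v|^3/t^2 + 3*|v|/t) * Real.exp (-v^2/(2*t)) := mul_le_mul_of_nonneg_right h1 hE.le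
    _ = (1/t^2) * (|v|^3 * Real.exp (-v^2/(2*t))) + (3/t) * (|v| * Real.exp (-v^2/(2*t))) := by
        ring
    _ ≤ (1/t^2) * bnd t B 3 n + (3/t) * bnd t B 1 n := by
        have : (0:ℝ) ≤ 1/t^2 := by positivity
        have : (0:ℝ) ≤ 3/t := by positivity
        gcongr

lemma summable_qterm (t θ : ℝ) (ht : 0 < t) :
    Summable (fun n : ℤ => (1 - (θ + 2*π*n)^2/t) * Real.exp (-(θ + 2*π*n)^2 / (2*t))) := by
  apply Summable.of_norm_bounded (g := fun n => bnd t |θ| 0 n + (1/t) * bnd t |θ| 2 n)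
    ((summable_bnd t _ ht (abs_nonneg θ) 0).add ((summable_bnd t _ ht (abs_nonneg θ) 2).mul_left _))
  intro n
  exact qterm_bound t |θ| θ ht le_rfl n

lemma summable_rterm (t θ : ℝ) (ht : 0 < t) :
    Summable (fun n : ℤ => ((θ + 2*π*n)^3/t^2 - 3*(θ + 2*π*n)/t) * Real.exp (-(θ + 2*π*n)^2 / (2*t))) := by
  apply Summable.of_norm_bounded (g := fun n => (1/t^2) * bnd t |θ| 3 n + (3/t) * bnd t |θ| 1 n)
    (((summable_bnd t _ ht (abs_nonneg θ) 3).mul_left _).add ((summable_bnd t _ ht (abs_nonneg θ) 1).mul_left _))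
  intro n
  exact rterm_bound t |θ| θ ht le_rfl n
lemma abs_le_of_Ioo {θ y : ℝ} (hy : y ∈ Set.Ioo (θ-1) (θ+1)) : |y| ≤ |θ| + 1 := by
  rw [abs_le]
  rcases abs_le.1 (le_refl |θ|) with ⟨h1, h2⟩
  obtain ⟨h3, h4⟩ := hy
  constructor <;> linarith

lemma hasDerivAt_P (t θ : ℝ) (ht : 0 < t) :
    HasDerivAt (fun y : ℝ => ∑' n : ℤ, (y + 2*π*n) * Real.exp (-(y + 2*π*n)^2 / (2*t)))
      (∑' n : ℤ, (1 - (θ + 2*π*n)^2/t) * Real.exp (-(θ + 2*π*n)^2/(2*t))) θ := by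
  have hmem : θ ∈ Set.Ioo (θ-1) (θ+1) := by constructor <;> linarith
  refine hasDerivAt_tsum_of_isPreconnected
    (u := fun n => bnd t (|θ|+1) 0 n + (1/t) * bnd t (|θ|+1) 2 n)
    (((summable_bnd t _ ht (by positivity) 0).add ((summable_bnd t _ ht (by positivity) 2).mul_left _)))
    isOpen_Ioo (isPreconnected_Ioo)
    (fun n y _ => hasDerivAt_pterm t (2*π*n) ht.ne' y)
    (fun n y hy => ?_) hmem (summable_pterm t θ ht) hmem
  rw [Real.norm_eq_abs]
  exact qterm_bound t (|θ|+1) y ht (abs_le_of_Ioo hy) n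

lemma hasDerivAt_Q (t θ : ℝ) (ht : 0 < t) :
    HasDerivAt (fun y : ℝ => ∑' n : ℤ, (1 - (y + 2*π*n)^2/t) * Real.exp (-(y + 2*π*n)^2 / (2*t)))
      (∑' n : ℤ, ((θ + 2*π*n)^3/t^2 - 3*(θ + 2*π*n)/t) * Real.exp (-(θ + 2*π*n)^2/(2*t))) θ := by
  have hmem : θ ∈ Set.Ioo (θ-1) (θ+1) := by constructor <;> linarith
  refine hasDerivAt_tsum_of_isPreconnected
    (u := fun n => (1/t^2) * bnd t (|θ|+1) 3 n + (3/t) * bnd t (|θ|+1) 1 n)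
    ((((summable_bnd t _ ht (by positivity) 3).mul_left _).add ((summable_bnd t _ ht (by positivity) 1).mul_left _)))
    isOpen_Ioo (isPreconnected_Ioo)
    (fun n y _ => hasDerivAt_qterm t (2*π*n) ht.ne' y)
    (fun n y hy => ?_) hmem (summable_qterm t θ ht) hmem
  rw [Real.norm_eq_abs]
  exact rterm_bound t (|θ|+1) y ht (abs_le_of_Ioo hy) n

lemma tterm_bound (t θ τ : ℝ) (ht : 0 < t) (hτ : τ ∈ Set.Ioo (t/2) (2*t)) (n : ℤ) :
    |(θ + 2*π*n)^3 / (2*τ^2) * Real.exp (-(θ + 2*π*n)^2/(2*τ))| ≤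
      (2/t^2) * bnd (2*t) |θ| 3 n := by
  obtain ⟨h1, h2⟩ := hτ
  have hτ0 : 0 < τ := lt_trans (by positivity) h1
  set v := θ + 2*π*n with hv
  rw [abs_mul, abs_of_pos (Real.exp_pos _), abs_div, abs_of_pos (by positivity : (0:ℝ) < 2*τ^2),
    abs_pow]
  have hc1 : |v|^3 / (2*τ^2) ≤ (2/t^2) * |v|^3 := by
    have h4 : t^2 ≤ 4*τ^2 := by nlinarith
    have hv3 : (0:ℝ) ≤ |v|^3 := by positivity
    have he : (2/t^2) * |v|^3 = 2*|v|^3/t^2 := by ring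
    rw [he, div_le_div_iff₀ (by positivity) (by positivity)]
    nlinarith
  have hc2 : Real.exp (-v^2/(2*τ)) ≤ Real.exp (-v^2/(2*(2*t))) := by
    apply Real.exp_le_exp.2
    rw [div_le_div_iff₀ (by positivity) (by positivity)]
    nlinarith [sq_nonneg v]
  calc |v|^3 / (2*τ^2) * Real.exp (-v^2/(2*τ))
      ≤ ((2/t^2) * |v|^3) * Real.exp (-v^2/(2*(2*t))) := by
        apply mul_le_mul hc1 hc2 (Real.exp_pos _).le (by positivity)
    _ = (2/t^2) * (|v|^3 * Real.exp (-v^2/(2*(2*t)))) := by ring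
    _ ≤ (2/t^2) * bnd (2*t) |θ| 3 n := by
        have := E_bound (2*t) |θ| θ (by positivity) le_rfl 3 n
        have h2t : (0:ℝ) ≤ 2/t^2 := by positivity
        gcongr

lemma hasDerivAt_T (t θ : ℝ) (ht : 0 < t) :
    HasDerivAt (fun τ : ℝ => ∑' n : ℤ, (θ + 2*π*n) * Real.exp (-(θ + 2*π*n)^2 / (2*τ)))
      (∑' n : ℤ, (θ + 2*π*n)^3 / (2*t^2) * Real.exp (-(θ + 2*π*n)^2/(2*t))) t := by
  have hmem : t ∈ Set.Ioo (t/2) (2*t) := by constructor <;> linarith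
  refine hasDerivAt_tsum_of_isPreconnected
    (u := fun n => (2/t^2) * bnd (2*t) |θ| 3 n)
    ((summable_bnd (2*t) _ (by positivity) (abs_nonneg θ) 3).mul_left _)
    isOpen_Ioo (isPreconnected_Ioo)
    (fun n τ hτ => hasDerivAt_tterm (2*π*n) θ (lt_trans (by positivity) hτ.1))
    (fun n τ hτ => ?_) hmem (summable_pterm t θ ht) hmem
  rw [Real.norm_eq_abs]
  exact tterm_bound t θ τ ht hτ n
noncomputable def EUP (t : ℝ) : ℝ → ℝ :=
  fun θ => ∑' n : ℤ, (θ + 2*π*n) * Real.exp (-(θ + 2*π*n)^2 / (2*t))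

noncomputable def EUQ (t : ℝ) : ℝ → ℝ :=
  fun θ => ∑' n : ℤ, (1 - (θ + 2*π*n)^2/t) * Real.exp (-(θ + 2*π*n)^2 / (2*t))

noncomputable def EUR (t : ℝ) : ℝ → ℝ :=
  fun θ => ∑' n : ℤ, ((θ + 2*π*n)^3/t^2 - 3*(θ + 2*π*n)/t) * Real.exp (-(θ + 2*π*n)^2 / (2*t))

lemma hasDerivAt_EUP (t θ : ℝ) (ht : 0 < t) : HasDerivAt (EUP t) (EUQ t θ) θ := by
  unfold EUP EUQ
  exact hasDerivAt_P t θ ht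

lemma hasDerivAt_EUQ (t θ : ℝ) (ht : 0 < t) : HasDerivAt (EUQ t) (EUR t θ) θ := by
  unfold EUQ EUR
  exact hasDerivAt_Q t θ ht

lemma hasDerivAt_EUP_t (t θ : ℝ) (ht : 0 < t) :
    HasDerivAt (fun τ => EUP τ θ) ((1/2) * EUR t θ + (3/(2*t)) * EUP t θ) t := by
  have h : HasDerivAt (fun τ => EUP τ θ)
      (∑' n : ℤ, (θ + 2*π*n)^3 / (2*t^2) * Real.exp (-(θ + 2*π*n)^2/(2*t))) t := by
    unfold EUP
    exact hasDerivAt_T t θ ht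
  have hsum : (∑' n : ℤ, (θ + 2*π*n)^3 / (2*t^2) * Real.exp (-(θ + 2*π*n)^2/(2*t)))
      = (1/2) * EUR t θ + (3/(2*t)) * EUP t θ := by
    unfold EUR EUP
    rw [← tsum_mul_left, ← tsum_mul_left,
      ← Summable.tsum_add ((summable_rterm t θ ht).mul_left _) ((summable_pterm t θ ht).mul_left _)]
    refine tsum_congr fun n => ?_
    field_simp
    ring
  exact hsum ▸ h
/-- Eskin–Urakawa heat kernel formula on `SU(2) ≅ S³`: the function
`ρ_t(θ) = e^{t/2}(2πt)^{-3/2} Σ_{n∈ℤ} ((θ+2πn)/sin(θ+2πn)) e^{-(θ+2πn)²/(2t)}`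
satisfies the radial heat equation
`∂ρ/∂t = ½(∂²ρ/∂θ² + 2 cot θ ∂ρ/∂θ)` wherever `sin θ ≠ 0`. -/
theorem eskin_urakawa_heat_kernel_S3
    (ρ : ℝ → ℝ → ℝ)
    (hρ : ∀ t θ : ℝ, ρ t θ =
      Real.exp (t / 2) * (2 * π * t) ^ (-(3 : ℝ) / 2) *
        ∑' n : ℤ, ((θ + 2 * π * n) / Real.sin (θ + 2 * π * n)) *
          Real.exp (-(θ + 2 * π * n) ^ 2 / (2 * t))) :
    ∀ t θ : ℝ, 0 < t → Real.sin θ ≠ 0 →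
      HasDerivAt (fun τ : ℝ => ρ τ θ)
        ((1 / 2) * (deriv (deriv (ρ t)) θ +
          2 * (Real.cos θ / Real.sin θ) * deriv (ρ t) θ)) t := by
  have hrep : ∀ τ x : ℝ, ρ τ x =
      Real.exp (τ/2) * (2*π*τ) ^ (-(3:ℝ)/2) * EUP τ x / Real.sin x := by
    intro τ x
    rw [hρ]
    have hterm : ∀ n : ℤ, ((x + 2*π*n) / Real.sin (x + 2*π*n)) * Real.exp (-(x + 2*π*n)^2/(2*τ))
        = ((x + 2*π*n) * Real.exp (-(x + 2*π*n)^2/(2*τ))) * (Real.sin x)⁻¹ := by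
      intro n
      have hs : Real.sin (x + 2*π*(n:ℝ)) = Real.sin x := by
        rw [show x + 2*π*(n:ℝ) = x + (n:ℝ)*(2*π) by ring]
        exact Real.sin_add_int_mul_two_pi x n
      rw [hs, div_eq_mul_inv]
      ring
    rw [tsum_congr hterm, tsum_mul_right]
    unfold EUP
    rw [div_eq_mul_inv]
    ring
  intro t θ ht hsin
  set a : ℝ := Real.exp (t/2) * (2*π*t) ^ (-(3:ℝ)/2) with ha
  have hU : IsOpen {x : ℝ | Real.sin x ≠ 0} :=
    isOpen_compl_singleton.preimage Real.continuous_sin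
  have hmemU : θ ∈ {x : ℝ | Real.sin x ≠ 0} := hsin
  -- first derivative in θ, valid on U
  have hD1 : ∀ x ∈ {x : ℝ | Real.sin x ≠ 0}, HasDerivAt (ρ t)
      ((a * EUQ t x * Real.sin x - a * EUP t x * Real.cos x) / Real.sin x ^ 2) x := by
    intro x hx
    have hfun : ρ t = fun y => a * EUP t y / Real.sin y := funext fun y => hrep t y
    rw [hfun]
    exact ((hasDerivAt_EUP t x ht).const_mul a).div (Real.hasDerivAt_sin x) hx
  set D1 : ℝ → ℝ := fun x =>
    (a * EUQ t x * Real.sin x - a * EUP t x * Real.cos x) / Real.sin x ^ 2 with hD1def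
  have hderiv1 : deriv (ρ t) θ = D1 θ := (hD1 θ hmemU).deriv
  -- second derivative
  have hN : HasDerivAt (fun x => a * EUQ t x * Real.sin x - a * EUP t x * Real.cos x)
      ((a * EUR t θ * Real.sin θ + a * EUQ t θ * Real.cos θ) -
        (a * EUQ t θ * Real.cos θ + a * EUP t θ * (-Real.sin θ))) θ :=
    (((hasDerivAt_EUQ t θ ht).const_mul a).mul (Real.hasDerivAt_sin θ)).sub
      (((hasDerivAt_EUP t θ ht).const_mul a).mul (Real.hasDerivAt_cos θ))
  have hden : HasDerivAt (fun x => Real.sin x ^ 2) (2 * Real.sin θ ^ 1 * Real.cos θ) θ :=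
    (Real.hasDerivAt_sin θ).pow 2
  have hD1' : HasDerivAt D1
      ((((a * EUR t θ * Real.sin θ + a * EUQ t θ * Real.cos θ) -
          (a * EUQ t θ * Real.cos θ + a * EUP t θ * (-Real.sin θ))) * Real.sin θ ^ 2 -
        (a * EUQ t θ * Real.sin θ - a * EUP t θ * Real.cos θ) *
          (2 * Real.sin θ ^ 1 * Real.cos θ)) / (Real.sin θ ^ 2) ^ 2) θ :=
    hN.div hden (pow_ne_zero 2 hsin)
  have hderiv2 : deriv (deriv (ρ t)) θ = deriv D1 θ := by
    apply Filter.EventuallyEq.deriv_eq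
    filter_upwards [hU.mem_nhds hmemU] with x hx
    exact (hD1 x hx).deriv
  rw [hderiv2, hD1'.deriv, hderiv1]
  -- now the t-derivative
  have hfunτ : (fun τ : ℝ => ρ τ θ) =
      fun τ => Real.exp (τ/2) * (2*π*τ) ^ (-(3:ℝ)/2) * EUP τ θ / Real.sin θ :=
    funext fun τ => hrep τ θ
  rw [hfunτ]
  have he : HasDerivAt (fun τ : ℝ => Real.exp (τ/2)) (Real.exp (t/2) * (1/2)) t := by
    have : HasDerivAt (fun τ : ℝ => τ/2) (1/2) t := (hasDerivAt_id t).div_const 2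
    simpa using this.exp
  have hinner : HasDerivAt (fun τ : ℝ => 2*π*τ) (2*π) t := by
    simpa using (hasDerivAt_id t).const_mul (2*π)
  have houter : HasDerivAt (fun y : ℝ => y ^ (-(3:ℝ)/2))
      ((-(3:ℝ)/2) * (2*π*t) ^ (-(3:ℝ)/2 - 1)) (2*π*t) :=
    Real.hasDerivAt_rpow_const (Or.inl (by positivity))
  have hg : HasDerivAt (fun τ : ℝ => (2*π*τ) ^ (-(3:ℝ)/2))
      ((-(3:ℝ)/2) * (2*π*t) ^ (-(3:ℝ)/2 - 1) * (2*π)) t := houter.comp t hinner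
  have hPt := hasDerivAt_EUP_t t θ ht
  have htotal := ((he.mul hg).mul hPt).div_const (Real.sin θ)
  simp only [Pi.mul_apply] at htotal
  refine htotal.congr_deriv ?_
  -- scalar identity
  have hkey : (2*π*t) ^ (-(3:ℝ)/2 - 1) * (2*π*t) = (2*π*t) ^ (-(3:ℝ)/2) := by
    rw [← Real.rpow_add_one (by positivity : (2*π*t) ≠ 0)]
    norm_num
  have ht' : t ≠ 0 := ht.ne'
  set g : ℝ := (2*π*t) ^ (-(3:ℝ)/2) with hgdef
  set g' : ℝ := (2*π*t) ^ (-(3:ℝ)/2 - 1) with hg'def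
  set e : ℝ := Real.exp (t/2) with hedef
  have hkey' : g' * (2*π) = g / t := by
    rw [eq_div_iff ht']
    calc g' * (2*π) * t = g' * (2*π*t) := by ring
      _ = g := hkey
  have hg2 : g' = g / (2*π*t) := by
    rw [eq_div_iff (by positivity : (2*π*t) ≠ 0)]
    exact hkey
  have hπ : π ≠ 0 := pi_ne_zero
  simp only [hD1def]
  clear_value D1 a e g g'
  rw [hg2, ha]
  field_simp
  ring
end
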